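/- Let V be a finite-dimensional real normed vector space and I a finite set with |I| ≥ 2. Define r(x,t) = max_{i∈I}(|x_i| + t_i) on R_V(I) = {(x,t) : ∑ t_i = 1, ∑ t_i x_i = 0, t_i > 0}. Fix (x,t) with r(x,t) > 1, let π be the partition generated by i ~ j iff |x_i − x_j| ≤ t_i + t_j, and define the vector X_i = −x_{[i]} (the negative of the weighted barycentre of the block containing i). Then for 0 < s < 1 and every i ∈ I achieving |x_i| + t_i = r(x,t), one has |x_i + sX_i| + t_i ≤ r(x,t) − s(r(x,t) − t_{[i]}), and moreover r(x,t) − t_{[i]} > min_{k∈I} t_k. -/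

import Mathlib

/-!
Every point of a block of the partition generated by `‖x a - x b‖ ≤ t a + t b` lies within
`t_B - t_i` of the `t`-weighted barycentre `x_B` of its block `B`: this survives adding to a
block one point linked to it, and a block is reached from a single point by such additions.
If the block of a maximiser `i` were everything, then `x_B = 0` and `t_B = 1`, so `r ≤ 1`;
hence some `k` lies outside it and `t_B ≤ 1 - t_k`. The flow estimate is convexity:
`x_i - s x_B = s (x_i - x_B) + (1 - s) x_i`.
-/

open Finset

section Barycentre

variable {I V : Type*} [NormedAddCommGroup V] [NormedSpace ℝ V] (x : I → V) (t : I → ℝ)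

/-- Scaled by `t_S` so that no division occurs:
`‖x m - x_S‖ ≤ t_S - t_m` for every `m ∈ S`, with `x_S` the barycentre of `S`. -/
def BarycentreClose (S : Finset I) : Prop :=
  ∀ m ∈ S, ‖(∑ l ∈ S, t l) • x m - ∑ l ∈ S, t l • x l‖ ≤ (∑ l ∈ S, t l) * (∑ l ∈ S, t l - t m)

variable {x t}

lemma barycentreClose_singleton (i : I) : BarycentreClose x t {i} := by
  intro m hm
  rw [mem_singleton.mp hm]
  simp

lemma BarycentreClose.norm_sub_le_of_mem {S : Finset I} (hS : BarycentreClose x t S)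
    (hT : 0 < ∑ l ∈ S, t l) {m k : I} (hm : m ∈ S) (hk : k ∈ S) :
    ‖x m - x k‖ ≤ 2 * ∑ l ∈ S, t l - t m - t k := by
  set T := ∑ l ∈ S, t l
  set y := ∑ l ∈ S, t l • x l
  refine le_of_mul_le_mul_left ?_ hT
  calc T * ‖x m - x k‖ = ‖(T • x m - y) - (T • x k - y)‖ := by
        rw [← norm_smul_of_nonneg hT.le]; congr 1; module
    _ ≤ ‖T • x m - y‖ + ‖T • x k - y‖ := norm_sub_le _ _
    _ ≤ T * (T - t m) + T * (T - t k) := add_le_add (hS m hm) (hS k hk)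
    _ = T * (2 * T - t m - t k) := by ring

lemma BarycentreClose.insert [DecidableEq I] (ht : ∀ l, 0 < t l) {S : Finset I}
    (hS : BarycentreClose x t S) {j k : I} (hk : k ∈ S) (hj : j ∉ S)
    (hkj : ‖x k - x j‖ ≤ t k + t j) : BarycentreClose x t (insert j S) := by
  have hT : 0 < ∑ l ∈ S, t l := sum_pos (fun l _ => ht l) ⟨k, hk⟩
  intro m hm
  rw [sum_insert hj, sum_insert hj]
  set T := ∑ l ∈ S, t l
  set y := ∑ l ∈ S, t l • x l
  rcases mem_insert.mp hm with rfl | hmS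
  · calc ‖(t m + T) • x m - (t m • x m + y)‖ = ‖T • (x m - x k) + (T • x k - y)‖ := by
          congr 1; module
      _ ≤ T * ‖x m - x k‖ + T * (T - t k) := by
          grw [norm_add_le, norm_smul_of_nonneg hT.le, hS k hk]
      _ ≤ T * (t k + t m) + T * (T - t k) := by
          grw [norm_sub_rev, hkj]
      _ = (t m + T) * (t m + T - t m) := by ring
  · have hmj : ‖x m - x j‖ ≤ 2 * T - t m + t j :=
      calc ‖x m - x j‖ ≤ ‖x m - x k‖ + ‖x k - x j‖ := norm_sub_le_norm_sub_add_norm_sub _ _ _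
        _ ≤ 2 * T - t m - t k + (t k + t j) := add_le_add (hS.norm_sub_le_of_mem hT hmS hk) hkj
        _ = 2 * T - t m + t j := by ring
    calc ‖(t j + T) • x m - (t j • x j + y)‖ = ‖t j • (x m - x j) + (T • x m - y)‖ := by
          congr 1; module
      _ ≤ t j * ‖x m - x j‖ + T * (T - t m) := by
          grw [norm_add_le, norm_smul_of_nonneg (ht j).le, hS m hmS]
      _ ≤ t j * (2 * T - t m + t j) + T * (T - t m) := by
          grw [hmj]
          exact (ht j).le
      _ = (t j + T) * (t j + T - t m) := by ring

/-- Lemma (lem:part), in the scaled form of `BarycentreClose`. -/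
lemma barycentreClose_of_mem_iff_eqvGen (ht : ∀ l, 0 < t l) {i : I} {C : Finset I}
    (hC : ∀ j, j ∈ C ↔ Relation.EqvGen (fun a b => ‖x a - x b‖ ≤ t a + t b) i j) :
    BarycentreClose x t C := by
  classical
  have hiC : i ∈ C := (hC i).2 (.refl i)
  -- a largest `BarycentreClose` subset of `C` through `i` is closed under the relation
  obtain ⟨A, hA, hmax⟩ := exists_max_image
    (C.powerset.filter fun A => i ∈ A ∧ BarycentreClose x t A) card
    ⟨{i}, by simp [hiC, barycentreClose_singleton]⟩
  simp only [mem_filter, mem_powerset] at hA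
  obtain ⟨hAC, hiA, hAclose⟩ := hA
  have hclosed : ∀ p q, ‖x p - x q‖ ≤ t p + t q → p ∈ A → q ∈ A := by
    intro p q hpq hp
    by_contra hq
    have hqC : q ∈ C :=
      (hC q).2 (((hC p).1 (hAC hp)).trans _ _ _ (.rel _ _ hpq))
    have := hmax (insert q A) (by
      simp only [mem_filter, mem_powerset]
      exact ⟨insert_subset hqC hAC, mem_insert_of_mem hiA, hAclose.insert ht hp hq hpq⟩)
    rw [card_insert_of_notMem hq] at this
    omega
  have hiff : ∀ q, Relation.EqvGen (fun a b => ‖x a - x b‖ ≤ t a + t b) i q → (i ∈ A ↔ q ∈ A) :=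
    fun q h => (Equivalence.eqvGen_iff (r := fun a b => (a ∈ A ↔ b ∈ A))
      ⟨fun _ => Iff.rfl, Iff.symm, Iff.trans⟩).1 <|
      Relation.EqvGen.mono (fun a b hab =>
        ⟨hclosed a b hab, hclosed b a (by rwa [norm_sub_rev, add_comm])⟩) i q h
  obtain rfl : A = C := hAC.antisymm fun q hq => (hiff q ((hC q).1 hq)).1 hiA
  exact hAclose

lemma BarycentreClose.norm_sub_centerMass_le {S : Finset I} (hS : BarycentreClose x t S)
    (hT : 0 < ∑ l ∈ S, t l) {m : I} (hm : m ∈ S) :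
    ‖x m - S.centerMass t x‖ ≤ ∑ l ∈ S, t l - t m := by
  have hsub : x m - S.centerMass t x
      = (∑ l ∈ S, t l)⁻¹ • ((∑ l ∈ S, t l) • x m - ∑ l ∈ S, t l • x l) := by
    rw [centerMass, smul_sub, smul_smul, inv_mul_cancel₀ hT.ne', one_smul]
  rw [hsub, norm_smul_of_nonneg (inv_nonneg.mpr hT.le), inv_mul_le_iff₀ hT]
  exact hS m hm

lemma BarycentreClose.norm_add_le_one [Fintype I] (h : BarycentreClose x t univ)
    (htsum : ∑ k, t k = 1) (hbar : ∑ k, t k • x k = 0) (k : I) : ‖x k‖ + t k ≤ 1 := by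
  have := h k (mem_univ k)
  rw [htsum, hbar, one_smul, sub_zero, one_mul] at this
  linarith

end Barycentre

lemma norm_add_smul_neg_le {V : Type*} [NormedAddCommGroup V] [NormedSpace ℝ V] {v c : V}
    {s d : ℝ} (hs0 : 0 ≤ s) (hs1 : s ≤ 1) (h : ‖v - c‖ ≤ d) :
    ‖v + s • -c‖ ≤ s * d + (1 - s) * ‖v‖ :=
  calc ‖v + s • -c‖ = ‖s • (v - c) + (1 - s) • v‖ := by congr 1; module
    _ ≤ s * ‖v - c‖ + (1 - s) * ‖v‖ := by
        grw [norm_add_le, norm_smul_of_nonneg hs0, norm_smul_of_nonneg (sub_nonneg.mpr hs1)]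
    _ ≤ s * d + (1 - s) * ‖v‖ := by grw [h]

theorem stmt_17_general {V : Type*} [NormedAddCommGroup V] [NormedSpace ℝ V]
    {I : Type*} [Fintype I] [Nonempty I]
    (x : I → V) (t : I → ℝ) (ht : ∀ k, 0 < t k)
    (htsum : ∑ k, t k = 1) (hbar : ∑ k, t k • x k = 0)
    (hr : 1 < Finset.univ.sup' Finset.univ_nonempty (fun k => ‖x k‖ + t k))
    (B : I → Finset I)
    (hB : ∀ a b, b ∈ B a ↔ Relation.EqvGen (fun a b => ‖x a - x b‖ ≤ t a + t b) a b) :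
    ∀ s : ℝ, 0 < s → s < 1 → ∀ i : I,
      ‖x i‖ + t i = Finset.univ.sup' Finset.univ_nonempty (fun k => ‖x k‖ + t k) →
      ‖x i + s • (-((∑ l ∈ B i, t l)⁻¹ • ∑ l ∈ B i, t l • x l))‖ + t i
          ≤ Finset.univ.sup' Finset.univ_nonempty (fun k => ‖x k‖ + t k)
            - s * (Finset.univ.sup' Finset.univ_nonempty (fun k => ‖x k‖ + t k)
                - ∑ l ∈ B i, t l) ∧
      Finset.univ.inf' Finset.univ_nonempty t
        < Finset.univ.sup' Finset.univ_nonempty (fun k => ‖x k‖ + t k)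
            - ∑ l ∈ B i, t l := by
  classical
  intro s hs0 hs1 i hi
  have hclose : BarycentreClose x t (B i) := barycentreClose_of_mem_iff_eqvGen ht (hB i)
  have hiB : i ∈ B i := (hB i i).2 (.refl i)
  have hT : 0 < ∑ l ∈ B i, t l := sum_pos (fun l _ => ht l) ⟨i, hiB⟩
  obtain ⟨k, hk⟩ : ∃ k, k ∉ B i := by
    by_contra! hall
    rw [eq_univ_of_forall hall] at hclose
    have := sup'_le univ_nonempty _ fun k _ => hclose.norm_add_le_one htsum hbar k
    linarith
  have hTk : ∑ l ∈ B i, t l + t k ≤ 1 := by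
    rw [← htsum, add_comm, ← sum_insert hk]
    exact sum_le_univ_sum_of_nonneg fun l => (ht l).le
  have hmin : univ.inf' univ_nonempty t ≤ t k := inf'_le _ (mem_univ k)
  have hflow : ‖x i + s • -(B i).centerMass t x‖ ≤ s * (∑ l ∈ B i, t l - t i) + (1 - s) * ‖x i‖ :=
    norm_add_smul_neg_le hs0.le hs1.le (hclose.norm_sub_centerMass_le hT hiB)
  rw [centerMass, eq_sub_of_add_eq hi] at hflow
  exact ⟨by linarith, by linarith⟩

/-- The key estimate for the flow in Section 3: let `r = max_k (‖x k‖ + t k) > 1` on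
`R_V(I)`, let `B i` be the block containing `i` of the partition generated by
`a ~ b ↔ ‖x a - x b‖ ≤ t a + t b`, and let `X i = -x_{B i}` be the negative of the
weighted barycentre of the block.  Then for `0 < s < 1` and every `i` achieving the
maximum, `‖x i + s • X i‖ + t i ≤ r - s * (r - t_{B i})`, and moreover
`r - t_{B i} > min_k t k`. -/
theorem stmt_17 {V : Type*} [NormedAddCommGroup V] [NormedSpace ℝ V]
    {I : Type*} [Fintype I] [Nonempty I] (hcard : 2 ≤ Fintype.card I)
    (x : I → V) (t : I → ℝ) (ht : ∀ k, 0 < t k)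
    (htsum : ∑ k, t k = 1) (hbar : ∑ k, t k • x k = 0)
    (hr : 1 < Finset.univ.sup' Finset.univ_nonempty (fun k => ‖x k‖ + t k))
    (B : I → Finset I)
    (hB : ∀ a b, b ∈ B a ↔ Relation.EqvGen (fun a b => ‖x a - x b‖ ≤ t a + t b) a b) :
    ∀ s : ℝ, 0 < s → s < 1 → ∀ i : I,
      ‖x i‖ + t i = Finset.univ.sup' Finset.univ_nonempty (fun k => ‖x k‖ + t k) →
      ‖x i + s • (-((∑ l ∈ B i, t l)⁻¹ • ∑ l ∈ B i, t l • x l))‖ + t i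
          ≤ Finset.univ.sup' Finset.univ_nonempty (fun k => ‖x k‖ + t k)
            - s * (Finset.univ.sup' Finset.univ_nonempty (fun k => ‖x k‖ + t k)
                - ∑ l ∈ B i, t l) ∧
      Finset.univ.inf' Finset.univ_nonempty t
        < Finset.univ.sup' Finset.univ_nonempty (fun k => ‖x k‖ + t k)
            - ∑ l ∈ B i, t l :=
  stmt_17_general x t ht htsum hbar hr B hB
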